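/- Let X be a Banach space with a projectional sequence {P_α : α < κ} such that each subspace P_α X is weakly Lindelöf determined. Then X is a Plichko space. -/

import Mathlib

/-!
If `κ` has a countable cofinal subset, `X` is the closed span of countably many WLD ranges
`P ξ X`, so it is WLD itself. Otherwise `‖P α‖ ≤ M` on a cofinal set of indices, which is closed
under limits; enumerating it gives a projectional sequence `T` bounded by `M`. Let `A` consist of
the generating set of `T 0 X` and the images of the generating sets of `T (j + 1) X` under the
increments `T (j + 1) - T j`; it is linearly dense. For `ψ ∈ X*` and `i < lam`, only countably
many `ψ ∘ (T (j + 1) - T j)` with `j < i` are nonzero: otherwise, at the least `δ` below which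
uncountably many are, `δ` has uncountable cofinality and a closing-off argument in the WLD space
`T δ X` gives `j_n < δ` with `ψ ∘ T j_n → ψ ∘ T δ` on `T δ X`, which a nonzero increment above
all `j_n` contradicts. Hence each `ψ ∘ T i` has countable support on `A`, and these functionals
form a `1/M`-norming set.
-/

universe u

open Set Filter Topology Order

open Submodule (span)

section Ordinals

def HasCountableCofinalSet (κ : Ordinal) : Prop :=
  ∃ C : Set Ordinal, C.Countable ∧ C ⊆ Iio κ ∧ ∀ ξ < κ, ∃ c ∈ C, ξ ≤ c

theorem exists_cofinal_le_of_not_hasCountableCofinalSet {κ : Ordinal}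
    (hκ : ¬HasCountableCofinalSet κ) (f : Ordinal → ℝ) :
    ∃ M > 0, ∀ ξ < κ, ∃ α, ξ ≤ α ∧ α < κ ∧ f α ≤ M := by
  by_contra! h
  choose ξ hξκ hξ using fun n : ℕ => h (n + 1) n.cast_add_one_pos
  refine hκ ⟨range ξ, countable_range ξ, range_subset_iff.2 hξκ, fun β hβ => ?_⟩
  by_contra! hβξ
  obtain ⟨n, hn⟩ := exists_nat_ge (f β)
  linarith [hξ n β (hβξ _ (mem_range_self n)).le hβ]

/-- `δ` is the least ordinal below which `S` is uncountable. -/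
theorem exists_isSuccLimit_of_not_countable {S : Set Ordinal} {i : Ordinal} (hSi : S ⊆ Iio i)
    (hS : ¬S.Countable) :
    ∃ δ ≤ i, IsSuccLimit δ ∧
      (∀ C : Set Ordinal, C.Countable → C ⊆ Iio δ → ∃ β < δ, ∀ c ∈ C, c ≤ β) ∧
      ∀ β < δ, ∃ j ∈ S, β ≤ j ∧ j < δ := by
  set Γ := {γ | ¬(S ∩ Iio γ).Countable}
  have hi : i ∈ Γ := by
    show ¬(S ∩ Iio i).Countable
    rwa [inter_eq_left.2 hSi]
  have hδ : ¬(S ∩ Iio (sInf Γ)).Countable := csInf_mem (s := Γ) ⟨i, hi⟩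
  have hlt : ∀ γ < sInf Γ, (S ∩ Iio γ).Countable := fun γ hγ =>
    not_not.1 (notMem_of_lt_csInf hγ (OrderBot.bddBelow Γ))
  have hbdd : ∀ C : Set Ordinal, C.Countable → C ⊆ Iio (sInf Γ) →
      ∃ β < sInf Γ, ∀ c ∈ C, c ≤ β := by
    intro C hC hCδ
    by_contra! h
    refine hδ ((hC.biUnion fun c hc => hlt c (hCδ hc)).mono fun x ⟨hxS, hxδ⟩ => ?_)
    obtain ⟨c, hc, hxc⟩ := h x hxδ
    exact mem_biUnion hc ⟨hxS, hxc⟩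
  refine ⟨sInf Γ, csInf_le (OrderBot.bddBelow Γ) hi, Ordinal.isSuccLimit_iff.2 ⟨?_, ?_⟩, hbdd,
    fun β hβ => ?_⟩
  · rintro h
    exact hδ (by simp [h])
  · refine isSuccPrelimit_of_succ_lt fun a ha => (succ_le_of_lt ha).lt_of_ne fun h => hδ ?_
    refine ((hlt a ha).union (countable_singleton a)).mono fun x ⟨hxS, hxδ⟩ => ?_
    rw [← h, mem_Iio, Order.lt_succ_iff] at hxδ
    rcases hxδ.lt_or_eq with hxa | rfl
    exacts [Or.inl ⟨hxS, hxa⟩, Or.inr rfl]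
  · by_contra! h
    refine hδ ((hlt β hβ).mono ?_)
    rintro x ⟨hxS, hxδ⟩
    exact ⟨hxS, not_le.1 fun hβx => (h x hxS hβx).not_gt hxδ⟩

end Ordinals

section Banach

variable {X : Type*} [NormedAddCommGroup X] [NormedSpace ℝ X]

section Norming

def IsNorming (D : Set (X →L[ℝ] ℝ)) (c : ℝ) : Prop :=
  ∀ x : X, c * ‖x‖ ≤ sSup {t : ℝ | ∃ φ ∈ D, φ ≠ 0 ∧ t = |φ x| / ‖φ‖}

variable (X) in
def IsPlichko : Prop :=
  ∃ D : Set (X →L[ℝ] ℝ), (∃ c > (0 : ℝ), IsNorming D c) ∧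
    ∃ A : Set X, closure (span ℝ A : Set X) = univ ∧ ∀ φ ∈ D, {a ∈ A | φ a ≠ 0}.Countable

theorem abs_apply_div_norm_le_sSup {D : Set (X →L[ℝ] ℝ)} {φ : X →L[ℝ] ℝ} (hφD : φ ∈ D)
    (hφ : φ ≠ 0) (x : X) :
    |φ x| / ‖φ‖ ≤ sSup {t : ℝ | ∃ φ ∈ D, φ ≠ 0 ∧ t = |φ x| / ‖φ‖} := by
  refine le_csSup ⟨‖x‖, ?_⟩ ⟨φ, hφD, hφ, rfl⟩
  rintro _ ⟨φ, -, hφ, rfl⟩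
  rw [div_le_iff₀ (norm_pos_iff.2 hφ), mul_comm]
  exact φ.le_opNorm x

theorem isNorming_inv_of_dense {D : Set (X →L[ℝ] ℝ)} {S : Set X} (hS : Dense S) {M : ℝ}
    (h : ∀ y ∈ S, y ≠ 0 → ∃ φ ∈ D, ‖φ‖ ≤ M ∧ φ y = ‖y‖) : IsNorming D M⁻¹ := by
  intro x
  set N := sSup {t : ℝ | ∃ φ ∈ D, φ ≠ 0 ∧ t = |φ x| / ‖φ‖}
  have hN : 0 ≤ N := Real.sSup_nonneg fun _ ⟨_, _, _, ht⟩ => ht ▸ by positivity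
  -- a closed condition on `y` that holds on the dense set `S`; it is evaluated at `y = x`
  have hS' : ∀ y ∈ S, M⁻¹ * ‖y‖ - ‖x - y‖ ≤ N := by
    intro y hy
    rcases eq_or_ne y 0 with rfl | hy0
    · simpa using hN.trans' (by linarith [norm_nonneg x])
    obtain ⟨φ, hφD, hφM, hφy⟩ := h y hy hy0
    have hφ : 0 < ‖φ‖ := norm_pos_iff.2 fun h0 => hy0 (by simpa [h0, eq_comm] using hφy)
    refine le_trans ?_ (abs_apply_div_norm_le_sSup hφD (norm_pos_iff.1 hφ) x)
    have hxy : ‖y‖ - ‖φ‖ * ‖x - y‖ ≤ |φ x| := by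
      have := φ.le_opNorm (y - x)
      rw [map_sub, hφy, Real.norm_eq_abs, norm_sub_rev] at this
      linarith [le_abs_self (‖y‖ - φ x), le_abs_self (φ x)]
    calc M⁻¹ * ‖y‖ - ‖x - y‖ ≤ ‖y‖ / ‖φ‖ - ‖x - y‖ := by
          rw [inv_mul_eq_div]; gcongr
      _ = (‖y‖ - ‖φ‖ * ‖x - y‖) / ‖φ‖ := by field_simp
      _ ≤ |φ x| / ‖φ‖ := by gcongr
  have hclosed : IsClosed {y | M⁻¹ * ‖y‖ - ‖x - y‖ ≤ N} :=
    isClosed_le (by fun_prop) continuous_const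
  have hx := hclosed.closure_subset_iff.2 hS' (hS.closure_eq.symm ▸ mem_univ x)
  change M⁻¹ * ‖x‖ - ‖x - x‖ ≤ N at hx
  rwa [sub_self, norm_zero, sub_zero] at hx

end Norming

/-- A projectional sequence of length `κ` in the sense of the paper, except that the covering
condition `closure (⋃ ξ < κ, range (P ξ)) = univ` is assumed separately where it is needed. -/
structure IsProjectionalSeq (κ : Ordinal) (P : Ordinal → X →L[ℝ] X) : Prop where
  idem : ∀ ξ, ξ < κ → (P ξ).comp (P ξ) = P ξ
  comp : ∀ ξ η, ξ < η → η < κ → (P ξ).comp (P η) = P ξ ∧ (P η).comp (P ξ) = P ξ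
  limit : ∀ δ, δ < κ → IsSuccLimit δ → range (P δ) = closure (⋃ ξ < δ, range (P ξ))

namespace IsProjectionalSeq

variable {κ : Ordinal} {P : Ordinal → X →L[ℝ] X} (hP : IsProjectionalSeq κ P)
include hP

theorem apply_apply_of_le {ξ η : Ordinal} (h : ξ ≤ η) (hη : η < κ) (x : X) :
    P ξ (P η x) = P ξ x := by
  rcases h.lt_or_eq with h | rfl
  · exact DFunLike.congr_fun (hP.comp ξ η h hη).1 x
  · exact DFunLike.congr_fun (hP.idem ξ hη) x

theorem apply_apply_of_le' {ξ η : Ordinal} (h : ξ ≤ η) (hη : η < κ) (x : X) :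
    P η (P ξ x) = P ξ x := by
  rcases h.lt_or_eq with h | rfl
  · exact DFunLike.congr_fun (hP.comp ξ η h hη).2 x
  · exact DFunLike.congr_fun (hP.idem ξ hη) x

theorem apply_eq_self_of_mem_range {ξ η : Ordinal} (h : ξ ≤ η) (hη : η < κ) {z : X}
    (hz : z ∈ range (P ξ)) : P η z = z := by
  obtain ⟨x, rfl⟩ := hz
  exact hP.apply_apply_of_le' h hη x

theorem range_mono {ξ η : Ordinal} (h : ξ ≤ η) (hη : η < κ) : range (P ξ) ⊆ range (P η) :=
  fun z hz => ⟨z, hP.apply_eq_self_of_mem_range h hη hz⟩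

theorem iUnion_range_subset {ι : Type*} {s : Set ι} {g : ι → Ordinal} {a : Ordinal}
    (hg : ∀ i ∈ s, g i < κ) (hcof : ∀ ξ < a, ∃ i ∈ s, ξ ≤ g i) :
    ⋃ ξ < a, range (P ξ) ⊆ ⋃ i ∈ s, range (P (g i)) := by
  refine iUnion₂_subset fun ξ hξ => ?_
  obtain ⟨i, hi, hξi⟩ := hcof ξ hξ
  exact (hP.range_mono hξi (hg i hi)).trans
    (subset_biUnion_of_mem (u := fun i => range (P (g i))) hi)

theorem apply_increment_of_le {i j : Ordinal} (h : i ≤ j) (hj : succ j < κ) (x : X) :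
    P i (P (succ j) x - P j x) = 0 := by
  rw [map_sub, hP.apply_apply_of_le (h.trans (le_succ j)) hj,
    hP.apply_apply_of_le h ((lt_succ_of_le le_rfl).trans hj), sub_self]

theorem apply_increment_of_lt {i j : Ordinal} (h : j < i) (hi : i < κ) (x : X) :
    P i (P (succ j) x - P j x) = P (succ j) x - P j x := by
  rw [map_sub, hP.apply_apply_of_le' (succ_le_of_lt h) hi, hP.apply_apply_of_le' h.le hi]

theorem exists_dist_apply_lt {M : ℝ} {δ : Ordinal} (hM : ∀ ξ < δ, ‖P ξ‖ ≤ M) (hδ : δ < κ)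
    (hlim : IsSuccLimit δ) (x : X) {ε : ℝ} (hε : 0 < ε) :
    ∃ ξ₀ < δ, ∀ ξ, ξ₀ ≤ ξ → ξ < δ → dist (P ξ x) (P δ x) < ε := by
  have hM0 : 0 ≤ M := (norm_nonneg _).trans (hM 0 hlim.bot_lt)
  have hmem : P δ x ∈ closure (⋃ ξ < δ, range (P ξ)) := hP.limit δ hδ hlim ▸ mem_range_self x
  obtain ⟨z, hz, hdz⟩ := Metric.mem_closure_iff.1 hmem (ε / (M + 1)) (by positivity)
  obtain ⟨ξ₀, hξ₀, hz⟩ := mem_iUnion₂.1 hz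
  refine ⟨ξ₀, hξ₀, fun ξ hξ₀ξ hξδ => ?_⟩
  have hzξ : P ξ z = z := hP.apply_eq_self_of_mem_range hξ₀ξ (hξδ.trans hδ) hz
  have hsplit : P ξ x - P δ x = P ξ (P δ x - z) + (z - P δ x) := by
    rw [map_sub, hzξ, hP.apply_apply_of_le hξδ.le hδ]; abel
  rw [dist_eq_norm, hsplit]
  rw [dist_eq_norm] at hdz
  calc ‖P ξ (P δ x - z) + (z - P δ x)‖ ≤ M * ‖P δ x - z‖ + ‖P δ x - z‖ := by
        refine (norm_add_le _ _).trans (add_le_add ?_ (norm_sub_rev z _).le)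
        exact (P ξ).le_of_opNorm_le (hM ξ hξδ) _
    _ = (M + 1) * ‖P δ x - z‖ := by ring
    _ < (M + 1) * (ε / (M + 1)) := by gcongr
    _ = ε := by field_simp

theorem norm_le_of_isSuccLimit {M : ℝ} (hM0 : 0 ≤ M) {t : Ordinal} (ht : t < κ)
    (hlim : IsSuccLimit t) (hcof : ∀ β < t, ∃ α, β ≤ α ∧ α < t ∧ ‖P α‖ ≤ M) : ‖P t‖ ≤ M := by
  refine (P t).opNorm_le_bound hM0 fun x => ?_
  have hbound : ∀ z ∈ ⋃ ξ < t, range (P ξ), ‖P t x‖ ≤ (1 + M) * ‖P t x - z‖ + M * ‖x‖ := by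
    intro z hz
    obtain ⟨ξ, hξ, hz⟩ := mem_iUnion₂.1 hz
    obtain ⟨α, hξα, hαt, hαM⟩ := hcof ξ hξ
    have hzα : P α z = z := hP.apply_eq_self_of_mem_range hξα (hαt.trans ht) hz
    have hz' : z = P α (z - P t x) + P α x := by
      rw [map_sub, hzα, hP.apply_apply_of_le hαt.le ht]; abel
    have hzM : ‖z‖ ≤ M * ‖z - P t x‖ + M * ‖x‖ :=
      calc ‖z‖ = ‖P α (z - P t x) + P α x‖ := congrArg _ hz'
        _ ≤ M * ‖z - P t x‖ + M * ‖x‖ := (norm_add_le _ _).trans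
            (add_le_add ((P α).le_of_opNorm_le hαM _) ((P α).le_of_opNorm_le hαM _))
    calc ‖P t x‖ ≤ ‖z‖ + ‖P t x - z‖ := norm_le_insert' _ _
      _ ≤ M * ‖z - P t x‖ + M * ‖x‖ + ‖P t x - z‖ := by gcongr
      _ = (1 + M) * ‖P t x - z‖ + M * ‖x‖ := by rw [norm_sub_rev]; ring
  have hmem : P t x ∈ closure (⋃ ξ < t, range (P ξ)) := hP.limit t ht hlim ▸ mem_range_self x
  have hclosed : IsClosed {z | ‖P t x‖ ≤ (1 + M) * ‖P t x - z‖ + M * ‖x‖} :=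
    isClosed_le continuous_const (by fun_prop)
  have h := hclosed.closure_subset_iff.2 hbound hmem
  change ‖P t x‖ ≤ (1 + M) * ‖P t x - P t x‖ + M * ‖x‖ at h
  rwa [sub_self, norm_zero, mul_zero, zero_add] at h

end IsProjectionalSeq

section ClosingOff

theorem tendsto_apply_of_eventually_eq_on_span {ι : Type*} {l : Filter ι}
    {φ : ι → X →L[ℝ] ℝ} {φ' : X →L[ℝ] ℝ} {C : ℝ} (hC : ∀ n, ‖φ n‖ ≤ C) {s : Set X}
    (hs : ∀ a ∈ s, ∀ᶠ n in l, φ n a = φ' a) {w : X} (hw : w ∈ closure (span ℝ s : Set X)) :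
    Tendsto (fun n => φ n w) l (𝓝 (φ' w)) := by
  have hequi : Equicontinuous ((↑) ∘ φ : ι → X → ℝ) := by
    have := (NormedSpace.equicontinuous_TFAE φ).out 5 1
    exact this.1 ⟨C, hC⟩
  refine closure_minimal (fun x hx => ?_) (hequi.isClosed_setOfPred_tendsto φ'.continuous) hw
  refine tendsto_nhds_of_eventually_eq ?_
  simp only [Function.comp_apply]
  induction hx using Submodule.span_induction with
  | mem a ha => exact hs a ha
  | zero => simp
  | add x y _ _ hx hy => filter_upwards [hx, hy] with n h₁ h₂; simp [h₁, h₂]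
  | smul c x _ hx => filter_upwards [hx] with n h; simp [h]

/-- Closing-off argument: `b (n + 1)` lies beyond the convergence thresholds of the countably many
`a ∈ A` where `φ'` or `φ (b n)` does not vanish. -/
theorem exists_seq_eventually_eq {A : Set X}
    (hA : ∀ φ : X →L[ℝ] ℝ, {a ∈ A | φ a ≠ 0}.Countable) {δ : Ordinal}
    (hδ : ∀ C : Set Ordinal, C.Countable → C ⊆ Iio δ → ∃ β < δ, ∀ c ∈ C, c ≤ β)
    (φ : Ordinal → X →L[ℝ] ℝ) (φ' : X →L[ℝ] ℝ)
    (hφ : ∀ a ∈ A, ∀ ε > 0, ∃ τ < δ, ∀ j, τ ≤ j → j < δ → dist (φ j a) (φ' a) < ε) :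
    ∃ b : ℕ → Ordinal, (∀ n, b n < δ) ∧ ∀ a ∈ A, ∀ᶠ n in atTop, φ (b n) a = φ' a := by
  choose! τ hτδ hτ using fun a ha (m : ℕ) => hφ a ha (1 / (m + 1)) Nat.one_div_pos_of_nat
  have hnext : ∀ β < δ, ∃ β' < δ, β ≤ β' ∧
      ∀ a ∈ A, (φ' a ≠ 0 ∨ φ β a ≠ 0) → ∀ m, τ a m ≤ β' := by
    intro β hβ
    set B := {a ∈ A | φ' a ≠ 0} ∪ {a ∈ A | φ β a ≠ 0}
    have hBA : B ⊆ A := union_subset (sep_subset _ _) (sep_subset _ _)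
    have hBτ : (⋃ a ∈ B, range (τ a)).Countable :=
      ((hA φ').union (hA (φ β))).biUnion fun _ _ => countable_range _
    obtain ⟨β', hβ', hβ'le⟩ := hδ _ (hBτ.insert β)
      (insert_subset hβ (iUnion₂_subset fun a ha => range_subset_iff.2 (hτδ a (hBA ha))))
    refine ⟨β', hβ', hβ'le β (mem_insert β _), fun a ha ha0 m => hβ'le _ (Or.inr ?_)⟩
    exact mem_biUnion (ha0.imp (⟨ha, ·⟩) (⟨ha, ·⟩)) (mem_range_self m)
  choose! Θ hΘδ hΘle hΘτ using hnext
  obtain ⟨β₀, hβ₀, -⟩ := hδ ∅ countable_empty (empty_subset _)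
  set b : ℕ → Ordinal := fun n => Θ^[n] β₀
  have hb : ∀ n, b n < δ := fun n => by
    induction n with
    | zero => exact hβ₀
    | succ n ih => simpa [b, Function.iterate_succ_apply'] using hΘδ _ ih
  have hbsucc : ∀ n, b (n + 1) = Θ (b n) := fun n => Function.iterate_succ_apply' Θ n β₀
  have hbmono : Monotone b := monotone_nat_of_le_succ fun n => hbsucc n ▸ hΘle _ (hb n)
  refine ⟨b, hb, fun a ha => ?_⟩
  by_cases h : ∃ k, φ' a ≠ 0 ∨ φ (b k) a ≠ 0
  · obtain ⟨k, hk⟩ := h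
    filter_upwards [eventually_gt_atTop k] with n hn
    refine eq_of_forall_dist_le fun ε hε => ?_
    obtain ⟨m, hm⟩ := exists_nat_one_div_lt hε
    have hτb : τ a m ≤ b n := (hbsucc k ▸ hΘτ _ (hb k) a ha hk m).trans (hbmono hn)
    exact (hτ a ha m _ hτb (hb n)).le.trans hm.le
  · push Not at h
    exact Eventually.of_forall fun n => (h n).2.trans (h 0).1.symm

end ClosingOff

def incrementSet (lam : Ordinal) (T : Ordinal → X →L[ℝ] X) (𝒜 : Ordinal → Set X) : Set X :=
  𝒜 0 ∪ ⋃ j, ⋃ (_ : succ j < lam), ⇑(T (succ j) - T j) '' 𝒜 (succ j)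

section Bounded

variable {lam : Ordinal} {T : Ordinal → X →L[ℝ] X} {𝒜 : Ordinal → Set X}
  (h𝒜span : ∀ i < lam, range (T i) ⊆ closure (span ℝ (𝒜 i) : Set X))
  (h𝒜supp : ∀ i < lam, ∀ φ : X →L[ℝ] ℝ, {a ∈ 𝒜 i | φ a ≠ 0}.Countable)
include h𝒜span

include h𝒜supp in
theorem IsProjectionalSeq.countable_setOf_comp_increment_ne_zero (hT : IsProjectionalSeq lam T)
    {M : ℝ} (hM : ∀ i < lam, ‖T i‖ ≤ M) (ψ : X →L[ℝ] ℝ) {i : Ordinal} (hi : i < lam) :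
    {j | j < i ∧ ψ ∘L (T (succ j) - T j) ≠ 0}.Countable := by
  by_contra hS
  obtain ⟨δ, hδi, hδlim, hδbdd, hδS⟩ := exists_isSuccLimit_of_not_countable (fun j hj => hj.1) hS
  have hδ : δ < lam := hδi.trans_lt hi
  have hconv : ∀ a ∈ 𝒜 δ, ∀ ε > 0, ∃ τ < δ, ∀ j, τ ≤ j → j < δ →
      dist ((ψ ∘L T j) a) ((ψ ∘L T δ) a) < ε := by
    intro a _ ε hε
    obtain ⟨η, hη, hψη⟩ := Metric.uniformContinuous_iff.1 ψ.uniformContinuous ε hε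
    obtain ⟨τ, hτ, hτη⟩ := hT.exists_dist_apply_lt (fun ξ hξ => hM ξ (hξ.trans hδ)) hδ hδlim a hη
    exact ⟨τ, hτ, fun j hτj hjδ => hψη (hτη j hτj hjδ)⟩
  obtain ⟨b, hbδ, hb⟩ := exists_seq_eventually_eq (h𝒜supp δ hδ) hδbdd _ _ hconv
  obtain ⟨β, hβδ, hbβ⟩ := hδbdd (range b) (countable_range b) (range_subset_iff.2 hbδ)
  obtain ⟨j, ⟨-, hψj⟩, hβj, hjδ⟩ := hδS β hβδ
  obtain ⟨x, hx⟩ : ∃ x, ψ (T (succ j) x - T j x) ≠ 0 := by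
    by_contra! h
    exact hψj (ContinuousLinearMap.ext h)
  -- `w` is killed by every `T (b n)`, but not by `ψ ∘ T δ`
  set w := T (succ j) x - T j x
  have hw0 : ∀ n, (ψ ∘L T (b n)) w = 0 := fun n => by
    simp only [ContinuousLinearMap.comp_apply]
    rw [hT.apply_increment_of_le ((hbβ _ (mem_range_self n)).trans hβj)
      ((succ_le_of_lt hjδ).trans_lt hδ), map_zero]
  have hwδ : T δ w = w := hT.apply_increment_of_lt hjδ hδ x
  have hlim := tendsto_apply_of_eventually_eq_on_span (φ := fun n => ψ ∘L T (b n))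
    (fun n => (ψ.opNorm_comp_le _).trans (mul_le_mul_of_nonneg_left (hM _ ((hbδ n).trans hδ))
      (norm_nonneg ψ))) hb (h𝒜span δ hδ ⟨w, hwδ⟩)
  simp only [hw0, ContinuousLinearMap.comp_apply, hwδ] at hlim
  exact hx (tendsto_nhds_unique hlim tendsto_const_nhds)

theorem IsProjectionalSeq.range_subset_closure_span_incrementSet
    (hT : IsProjectionalSeq lam T) {i : Ordinal} (hi : i < lam) :
    range (T i) ⊆ closure (span ℝ (incrementSet lam T 𝒜) : Set X) := by
  set V := (span ℝ (incrementSet lam T 𝒜)).topologicalClosure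
  rw [← Submodule.topologicalClosure_coe]
  induction i using WellFoundedLT.induction with
  | _ i IH =>
  rcases Ordinal.zero_or_succ_or_isSuccLimit i with rfl | ⟨j, rfl⟩ | hlim
  · rw [Submodule.topologicalClosure_coe]
    exact (h𝒜span 0 hi).trans (closure_mono (Submodule.span_mono subset_union_left))
  · rintro _ ⟨x, rfl⟩
    set Q := T (succ j) - T j
    have hjT : T j (T (succ j) x) ∈ V := IH j (lt_succ j) ((lt_succ j).trans hi) (mem_range_self _)
    have hQ : Q (T (succ j) x) ∈ V := by
      rw [← SetLike.mem_coe, Submodule.topologicalClosure_coe]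
      refine map_mem_closure Q.continuous (h𝒜span _ hi (mem_range_self x)) fun y hy => ?_
      refine Submodule.span_mono ?_ (Submodule.apply_mem_span_image_of_mem_span Q.toLinearMap hy)
      exact fun a ha => Or.inr (mem_iUnion₂.2 ⟨j, hi, ha⟩)
    have hsum : T (succ j) x = T j (T (succ j) x) + Q (T (succ j) x) := by
      rw [sub_apply, hT.apply_apply_of_le le_rfl hi]; abel
    exact hsum ▸ V.add_mem hjT hQ
  · rw [hT.limit i hi hlim]
    exact closure_minimal (iUnion₂_subset fun j hj => IH j hj (hj.trans hi))
      (Submodule.isClosed_topologicalClosure _)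

include h𝒜supp in
theorem IsProjectionalSeq.countable_setOf_incrementSet_comp_ne_zero
    (hT : IsProjectionalSeq lam T) {M : ℝ} (hM : ∀ i < lam, ‖T i‖ ≤ M) (ψ : X →L[ℝ] ℝ)
    {i : Ordinal} (hi : i < lam) :
    {a ∈ incrementSet lam T 𝒜 | (ψ ∘L T i) a ≠ 0}.Countable := by
  have hS := hT.countable_setOf_comp_increment_ne_zero h𝒜span h𝒜supp hM ψ hi
  refine ((h𝒜supp 0 (pos_of_gt hi) (ψ ∘L T i)).union
    (hS.biUnion fun j hj => (h𝒜supp (succ j) ((succ_le_of_lt hj.1).trans_lt hi)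
      ((ψ ∘L T i) ∘L (T (succ j) - T j))).image ⇑(T (succ j) - T j))).mono ?_
  rintro a ⟨ha | ha, hψa⟩
  · exact Or.inl ⟨ha, hψa⟩
  obtain ⟨j, hj, b, hb, rfl⟩ := mem_iUnion₂.1 ha
  change ψ (T i (T (succ j) b - T j b)) ≠ 0 at hψa
  have hji : j < i := lt_of_not_ge fun hij =>
    hψa (by rw [hT.apply_increment_of_le hij hj, map_zero])
  refine Or.inr (mem_biUnion (x := j) ⟨hji, fun h => hψa ?_⟩ ⟨b, ⟨hb, hψa⟩, rfl⟩)
  rw [hT.apply_increment_of_lt hji hi]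
  exact DFunLike.congr_fun h b

include h𝒜supp in
theorem IsProjectionalSeq.isPlichko (hT : IsProjectionalSeq lam T)
    (hcover : closure (⋃ i < lam, range (T i)) = univ) {M : ℝ} (hM0 : 0 < M)
    (hM : ∀ i < lam, ‖T i‖ ≤ M) : IsPlichko X := by
  set A := incrementSet lam T 𝒜
  refine ⟨{φ | {a ∈ A | φ a ≠ 0}.Countable}, ⟨M⁻¹, inv_pos.2 hM0, ?_⟩, A, ?_, fun φ hφ => hφ⟩
  · refine isNorming_inv_of_dense (dense_iff_closure_eq.2 hcover) fun y hy hy0 => ?_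
    obtain ⟨i, hi, x, rfl⟩ := mem_iUnion₂.1 hy
    obtain ⟨ψ, hψ, hψy⟩ := exists_dual_vector ℝ (T i x) (norm_ne_zero_iff.2 hy0)
    refine ⟨ψ ∘L T i, hT.countable_setOf_incrementSet_comp_ne_zero h𝒜span h𝒜supp hM ψ hi,
      (ψ.opNorm_comp_le _).trans (by rw [hψ, one_mul]; exact hM i hi), ?_⟩
    simpa [hT.apply_apply_of_le le_rfl hi] using hψy
  · refine eq_univ_of_univ_subset (hcover ▸ closure_minimal ?_ isClosed_closure)
    exact iUnion₂_subset fun i hi => hT.range_subset_closure_span_incrementSet h𝒜span hi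

end Bounded

namespace IsProjectionalSeq

variable {κ : Ordinal.{u}} {P : Ordinal → X →L[ℝ] X} (hP : IsProjectionalSeq κ P)
  (hcover : closure (⋃ ξ < κ, range (P ξ)) = univ)
include hP hcover

theorem isPlichko_of_countable_cofinal {C : Set Ordinal} (hC : C.Countable) (hCκ : C ⊆ Iio κ)
    (hCcof : ∀ ξ < κ, ∃ c ∈ C, ξ ≤ c) {𝒜 : Ordinal → Set X}
    (h𝒜span : ∀ α < κ, range (P α) ⊆ closure (span ℝ (𝒜 α) : Set X))
    (h𝒜supp : ∀ α < κ, ∀ φ : X →L[ℝ] ℝ, {a ∈ 𝒜 α | φ a ≠ 0}.Countable) : IsPlichko X := by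
  refine ⟨univ, ⟨1, one_pos, ?_⟩, ⋃ c ∈ C, 𝒜 c, ?_, fun φ _ => ?_⟩
  · simpa using isNorming_inv_of_dense (D := univ) (M := 1) dense_univ fun y _ hy =>
      (exists_dual_vector ℝ y (norm_ne_zero_iff.2 hy)).imp fun φ h =>
        ⟨mem_univ φ, h.1.le, by simpa using h.2⟩
  · refine eq_univ_of_univ_subset (hcover ▸ closure_minimal ?_ isClosed_closure)
    refine (hP.iUnion_range_subset (g := id) hCκ hCcof).trans (iUnion₂_subset fun c hc => ?_)
    exact (h𝒜span c (hCκ hc)).trans (closure_mono (Submodule.span_mono (subset_biUnion_of_mem hc)))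
  · refine (hC.biUnion fun c hc => h𝒜supp c (hCκ hc) φ).mono ?_
    rintro a ⟨ha, hφa⟩
    obtain ⟨c, hc, ha⟩ := mem_iUnion₂.1 ha
    exact mem_biUnion hc ⟨ha, hφa⟩

/-- `g` enumerates `Λ`; as `Λ` is closed under limits, `g` is continuous and the limit condition
passes to `P ∘ g`. -/
theorem exists_reindex {Λ : Set Ordinal} (hΛκ : Λ ⊆ Iio κ) (hcof : ∀ ξ < κ, ∃ α ∈ Λ, ξ ≤ α)
    (hclosed : ∀ t < κ, IsSuccLimit t → (∀ β < t, ∃ α ∈ Λ, β < α ∧ α < t) → t ∈ Λ) :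
    ∃ (lam : Ordinal.{u}) (g : Ordinal.{u} → Ordinal.{u}),
      IsProjectionalSeq lam (fun i => P (g i)) ∧ closure (⋃ i < lam, range (P (g i))) = univ ∧
        ∀ i < lam, g i ∈ Λ := by
  set s := Λ ∪ Ici κ
  have hs : ¬BddAbove s := not_bddAbove_iff.2 fun x =>
    ⟨max (succ x) κ, Or.inr (mem_Ici.2 (le_max_right _ _)), (lt_succ x).trans_le (le_max_left _ _)⟩
  have hsSup : ∀ t ⊆ s, t.Nonempty → BddAbove t → sSup t ∈ s := by
    intro t hts hne hbdd
    rcases le_or_gt κ (sSup t) with h | h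
    · exact Or.inr h
    by_cases hmem : sSup t ∈ t
    · exact hts hmem
    have hlt : ∀ c ∈ t, c < sSup t := fun c hc =>
      (le_csSup hbdd hc).lt_of_ne fun hc' => hmem (hc' ▸ hc)
    have hlim : IsSuccLimit (sSup t) :=
      by_contra fun hlim => hmem (csSup_mem_of_not_isSuccLimit hne hbdd hlim)
    refine Or.inl (hclosed _ h hlim fun β hβ => ?_)
    obtain ⟨c, hc, hβc⟩ := exists_lt_of_lt_csSup hne hβ
    exact ⟨c, (hts hc).resolve_right (not_le.2 ((hlt c hc).trans h)), hβc, hlt c hc⟩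
  have hg := Ordinal.isNormal_enumOrd hsSup hs
  set g := Ordinal.enumOrd s
  obtain ⟨lam, hlam⟩ : ∃ lam, g lam = κ := Ordinal.enumOrd_surjective hs (Or.inr (mem_Ici.2 le_rfl))
  have hlt : ∀ {i}, i < lam → g i < κ := fun hi => hlam ▸ hg.strictMono hi
  have hgΛ : ∀ i < lam, g i ∈ Λ := fun i hi =>
    (Ordinal.enumOrd_mem hs i).resolve_right (not_le.2 (hlt hi))
  have hgcof : ∀ ξ < κ, ∃ i ∈ Iio lam, ξ ≤ g i := by
    intro ξ hξ
    obtain ⟨α, hα, hξα⟩ := hcof ξ hξ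
    obtain ⟨i, rfl⟩ : ∃ i, g i = α := Ordinal.enumOrd_surjective hs (Or.inl hα)
    exact ⟨i, hg.strictMono.lt_iff_lt.1 (by rw [hlam]; exact hΛκ hα), hξα⟩
  refine ⟨lam, g, ⟨fun i hi => hP.idem _ (hlt hi),
    fun i j hij hj => hP.comp _ _ (hg.strictMono hij) (hlt hj), fun j hj hlim => ?_⟩,
    eq_univ_of_univ_subset (hcover ▸ closure_mono (hP.iUnion_range_subset (fun _ => hlt) hgcof)),
    hgΛ⟩
  rw [hP.limit _ (hlt hj) (hg.map_isSuccLimit hlim)]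
  refine congrArg closure (subset_antisymm (hP.iUnion_range_subset
    (s := Iio j) (fun i hi => hlt (lt_trans hi hj)) fun ξ hξ => ?_)
    (iUnion₂_subset fun i hi =>
      subset_biUnion_of_mem (u := fun ξ => range (P ξ)) (hg.strictMono hi)))
  obtain ⟨i, hi, hξi⟩ := (hg.lt_iff_exists_lt hlim).1 hξ
  exact ⟨i, hi, hξi.le⟩

end IsProjectionalSeq

end Banach

theorem statement12_general {X : Type*} [NormedAddCommGroup X] [NormedSpace ℝ X]
    (κ : Ordinal) (P : Ordinal → X →L[ℝ] X)
    (hproj : ∀ ξ, ξ < κ → (P ξ).comp (P ξ) = P ξ)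
    (hseq : ∀ ξ η, ξ < η → η < κ →
      (P ξ).comp (P η) = P ξ ∧ (P η).comp (P ξ) = P ξ)
    (hlimit : ∀ δ, δ < κ → Order.IsSuccLimit δ →
      Set.range (P δ) = closure (⋃ ξ < δ, Set.range (P ξ)))
    (hcover : closure (⋃ ξ < κ, Set.range (P ξ)) = (Set.univ : Set X))
    (hWLD : ∀ α, α < κ → ∃ A ⊆ Set.range (P α),
      Set.range (P α) ⊆ closure (Submodule.span ℝ A : Set X) ∧
      ∀ φ : X →L[ℝ] ℝ, {a ∈ A | φ a ≠ 0}.Countable) :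
    ∃ D : Set (X →L[ℝ] ℝ),
      (∃ c > (0:ℝ), ∀ x : X,
        c * ‖x‖ ≤ sSup {t : ℝ | ∃ φ ∈ D, φ ≠ 0 ∧ t = |φ x| / ‖φ‖}) ∧
      ∃ A : Set X, closure (Submodule.span ℝ A : Set X) = Set.univ ∧
        ∀ φ ∈ D, {a ∈ A | φ a ≠ 0}.Countable := by
  have hP : IsProjectionalSeq κ P := ⟨hproj, hseq, hlimit⟩
  choose! 𝒜 _ h𝒜span h𝒜supp using hWLD
  show IsPlichko X
  by_cases hκ : HasCountableCofinalSet κ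
  · obtain ⟨C, hC, hCκ, hCcof⟩ := hκ
    exact hP.isPlichko_of_countable_cofinal hcover hC hCκ hCcof h𝒜span h𝒜supp
  obtain ⟨M, hM0, hMcof⟩ := exists_cofinal_le_of_not_hasCountableCofinalSet hκ (‖P ·‖)
  obtain ⟨lam, g, hPg, hcov, hgΛ⟩ := hP.exists_reindex hcover (Λ := {α | α < κ ∧ ‖P α‖ ≤ M})
    (fun α hα => hα.1) (fun ξ hξ => (hMcof ξ hξ).imp fun α h => ⟨⟨h.2.1, h.2.2⟩, h.1⟩)
    fun t ht hlim hcof => ⟨ht, hP.norm_le_of_isSuccLimit hM0.le ht hlim fun β hβ =>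
      (hcof β hβ).imp fun α h => ⟨h.2.1.le, h.2.2, h.1.2⟩⟩
  exact hPg.isPlichko (𝒜 := fun i => 𝒜 (g i)) (fun i hi => h𝒜span _ (hgΛ i hi).1)
    (fun i hi => h𝒜supp _ (hgΛ i hi).1) hcov hM0 fun i hi => (hgΛ i hi).2

/-- if `X` has a projectional sequence `{P α : α < κ}` such that each
subspace `P α X` is weakly Lindelöf determined, then `X` is a Plichko space:
there are a norming set `D ⊆ X*` and a linearly dense `A ⊆ X` such that
`suppt(y, A)` is countable for every `y ∈ D`. -/
theorem statement12 {X : Type*} [NormedAddCommGroup X] [NormedSpace ℝ X] [CompleteSpace X]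
    (κ : Ordinal) (P : Ordinal → X →L[ℝ] X)
    (hproj : ∀ ξ, ξ < κ → (P ξ).comp (P ξ) = P ξ)
    (hseq : ∀ ξ η, ξ < η → η < κ →
      (P ξ).comp (P η) = P ξ ∧ (P η).comp (P ξ) = P ξ)
    (hlimit : ∀ δ, δ < κ → Order.IsSuccLimit δ →
      Set.range (P δ) = closure (⋃ ξ < δ, Set.range (P ξ)))
    (hcover : closure (⋃ ξ < κ, Set.range (P ξ)) = (Set.univ : Set X))
    (hWLD : ∀ α, α < κ → ∃ A ⊆ Set.range (P α),
      Set.range (P α) ⊆ closure (Submodule.span ℝ A : Set X) ∧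
      ∀ φ : X →L[ℝ] ℝ, {a ∈ A | φ a ≠ 0}.Countable) :
    ∃ D : Set (X →L[ℝ] ℝ),
      (∃ c > (0:ℝ), ∀ x : X,
        c * ‖x‖ ≤ sSup {t : ℝ | ∃ φ ∈ D, φ ≠ 0 ∧ t = |φ x| / ‖φ‖}) ∧
      ∃ A : Set X, closure (Submodule.span ℝ A : Set X) = Set.univ ∧
        ∀ φ ∈ D, {a ∈ A | φ a ≠ 0}.Countable :=
  statement12_general κ P hproj hseq hlimit hcover hWLD
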